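/- In the setup below, assume moreover that the height of Γ satisfies h ≥ t (so that x_{i_0} exists). Then p_t(Γ_0) = 1 and p_t(Γ∖Γ_0) ≤ p_t(Γ) − 1, where Γ_0 is the induced subtree of Γ rooted at x_{i_0} and Γ∖Γ_0 is the induced subforest obtained by deleting all vertices of Γ_0. -/

import Mathlib

open scoped Classical

/-- A rooted forest on the ambient vertex type `Fin n`: a set of vertices together with a
parent function (each edge `(parent v, v)` is directed away from the roots).  The `acyclic`
field guarantees that parent chains strictly decrease some level function, so the underlying
graph is a forest in which every vertex has at most one parent. -/
structure RootedForest (n : ℕ) where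
  verts : Set (Fin n)
  par : Fin n → Option (Fin n)
  par_none : ∀ v, v ∉ verts → par v = none
  mem_left : ∀ v u, par v = some u → v ∈ verts
  mem_right : ∀ v u, par v = some u → u ∈ verts
  acyclic : ∃ lvl : Fin n → ℕ, ∀ v u, par v = some u → lvl v = lvl u + 1

/-- A rooted tree: a rooted forest with exactly one root (hence connected). -/
structure RootedTreeOn (n : ℕ) extends RootedForest n where
  root : Fin n
  root_mem : root ∈ verts
  root_par : par root = none
  root_unique : ∀ v ∈ verts, par v = none → v = root

namespace RootedForest

variable {n : ℕ}

/-- One step of the parent function, on `Option`. -/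
def parStep (F : RootedForest n) : Option (Fin n) → Option (Fin n)
  | none => none
  | some v => F.par v

/-- The level of a vertex: its distance to the root of its component, i.e. the number of
(strict) ancestors of `v`. -/
noncomputable def level (F : RootedForest n) (v : Fin n) : ℕ :=
  sInf {m : ℕ | F.parStep^[m + 1] (some v) = none}

/-- The height of a rooted forest: the maximal level of a vertex. -/
noncomputable def height (F : RootedForest n) : ℕ :=
  sSup (F.level '' F.verts)

/-- A leaf: a vertex with no children. -/
def IsLeaf (F : RootedForest n) (v : Fin n) : Prop :=
  v ∈ F.verts ∧ ∀ u, F.par u ≠ some v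

/-- An isolated vertex: a vertex incident to no edge. -/
def Isolated (F : RootedForest n) (v : Fin n) : Prop :=
  v ∈ F.verts ∧ F.par v = none ∧ ∀ u, F.par u ≠ some v

/-- `F.IsPath t p` : `p 0, p 1, …, p (t-1)` is a directed path on `t` (distinct) vertices
in `F`, each consecutive pair being a directed edge. -/
def IsPath (F : RootedForest n) (t : ℕ) (p : ℕ → Fin n) : Prop :=
  (∀ j, j < t → p j ∈ F.verts) ∧
  (∀ j, j + 1 < t → F.par (p (j + 1)) = some (p j)) ∧
  (∀ j k, j < t → k < t → p j = p k → j = k)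

/-- `F.DescOrSelf x v` : `v = x` or `v` is a descendant of `x`. -/
def DescOrSelf (F : RootedForest n) (x v : Fin n) : Prop :=
  ∃ m : ℕ, F.parStep^[m] (some v) = some x

/-- The induced subforest obtained by deleting the vertices in `W` (and all incident
edges). -/
noncomputable def delete (F : RootedForest n) (W : Set (Fin n)) : RootedForest n where
  verts := F.verts \ W
  par v :=
    if v ∈ F.verts \ W then (F.par v).bind (fun u => if u ∈ W then none else some u)
    else none
  par_none := by
    intro v hv
    simp only [if_neg hv]
  mem_left := by
    intro v u h
    by_cases hv : v ∈ F.verts \ W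
    · exact hv
    · simp only [if_neg hv] at h
      exact absurd h (by simp)
  mem_right := by
    intro v u h
    by_cases hv : v ∈ F.verts \ W
    · simp only [if_pos hv, Option.bind_eq_some_iff] at h
      obtain ⟨w, hw, hw2⟩ := h
      by_cases hwW : w ∈ W
      · simp [hwW] at hw2
      · simp only [if_neg hwW, Option.some.injEq] at hw2
        subst hw2
        exact ⟨F.mem_right v w hw, hwW⟩
    · simp only [if_neg hv] at h
      exact absurd h (by simp)
  acyclic := by
    obtain ⟨lvl, hlvl⟩ := F.acyclic
    refine ⟨lvl, fun v u h => ?_⟩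
    by_cases hv : v ∈ F.verts \ W
    · simp only [if_pos hv, Option.bind_eq_some_iff] at h
      obtain ⟨w, hw, hw2⟩ := h
      by_cases hwW : w ∈ W
      · simp [hwW] at hw2
      · simp only [if_neg hwW, Option.some.injEq] at hw2
        subst hw2
        exact hlvl v w hw
    · simp only [if_neg hv] at h
      exact absurd h (by simp)

/-- The monomials corresponding to the directed paths on `t` vertices in `F`. -/
def pathGens (k : Type*) [Field k] (F : RootedForest n) (t : ℕ) :
    Set (MvPolynomial (Fin n) k) :=
  {f | ∃ p : ℕ → Fin n, F.IsPath t p ∧ f = ∏ j ∈ Finset.range t, MvPolynomial.X (p j)}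

/-- The path ideal `I_t(F)`: the ideal of `k[x_1,…,x_n]` generated by the monomials
corresponding to the directed paths on `t` vertices in `F`. -/
noncomputable def pathIdeal (k : Type*) [Field k] (F : RootedForest n) (t : ℕ) :
    Ideal (MvPolynomial (Fin n) k) :=
  Ideal.span (F.pathGens k t)

/-- `p_t(F)`: the maximal number of pairwise vertex-disjoint directed paths on `t+1`
vertices (i.e. of length `t`) in `F`. -/
noncomputable def pDisj (F : RootedForest n) (t : ℕ) : ℕ :=
  sSup {N : ℕ | ∃ P : Fin N → (ℕ → Fin n),
    (∀ i, F.IsPath (t + 1) (P i)) ∧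
    (∀ i i', i ≠ i' → ∀ j j', j < t + 1 → j' < t + 1 → P i j ≠ P i' j')}

/-- `l_s(F)`: the number of leaves of `F` whose level is at least `s - 1`. -/
noncomputable def lCount (F : RootedForest n) (s : ℕ) : ℕ :=
  Set.ncard {v | F.IsLeaf v ∧ s - 1 ≤ F.level v}

end RootedForest

/-! The vertices `x0, p 0, …, p (t-1)` form a path on `t + 1` vertices inside `Γ₀` whose last
vertex lies at the maximal level `level x0 + t`. Hence every path on `t + 1` vertices of `Γ₀`
must start at its root `x0`, so `p_t(Γ₀) = 1`; and adding this path to a maximal disjoint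
family in `Γ ∖ Γ₀` gives `p_t(Γ ∖ Γ₀) + 1` disjoint paths in `Γ`. -/

def seqCons {α : Type*} (x : α) (p : ℕ → α) : ℕ → α
  | 0 => x
  | j + 1 => p j

lemma seqCons_of_pos {α : Type*} (x : α) (p : ℕ → α) {j : ℕ} (hj : 0 < j) :
    seqCons x p j = p (j - 1) := by
  obtain ⟨k, rfl⟩ := Nat.exists_eq_succ_of_ne_zero hj.ne'
  rfl

namespace RootedForest

variable {n : ℕ} (F : RootedForest n)

@[simp]
lemma parStep_some (v : Fin n) : F.parStep (some v) = F.par v := rfl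

lemma iterate_parStep_none (m : ℕ) : F.parStep^[m] none = none :=
  Function.iterate_fixed rfl m

lemma iterate_parStep_eq_none {lvl : Fin n → ℕ}
    (hlvl : ∀ v u, F.par v = some u → lvl v = lvl u + 1) :
    ∀ (k : ℕ) (v : Fin n), lvl v ≤ k → F.parStep^[k + 1] (some v) = none := by
  intro k
  induction k with
  | zero =>
    intro v hv
    cases hpv : F.par v with
    | none => exact hpv
    | some u => have := hlvl v u hpv; omega
  | succ k ih =>
    intro v hv
    rw [Function.iterate_succ_apply, parStep_some]
    cases hpv : F.par v with
    | none => exact F.iterate_parStep_none _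
    | some u => have := hlvl v u hpv; exact ih u (by omega)

lemma level_eq_of_par_eq_some {v u : Fin n} (h : F.par v = some u) :
    F.level v = F.level u + 1 := by
  obtain ⟨lvl, hlvl⟩ := F.acyclic
  have hne : {m | F.parStep^[m] (some u) = none}.Nonempty :=
    ⟨lvl u + 1, F.iterate_parStep_eq_none hlvl _ u le_rfl⟩
  have hpos : 1 ≤ sInf {m | F.parStep^[m] (some u) = none} :=
    le_csInf hne fun m hm => Nat.pos_of_ne_zero (by rintro rfl; cases hm)
  calc F.level v = sInf {m | F.parStep^[m] (some u) = none} := by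
        simp only [level, Function.iterate_succ_apply, parStep_some, h]
    _ = F.level u + 1 := (Nat.sInf_add hpos).symm

lemma level_eq_of_iterate_parStep {x : Fin n} :
    ∀ (m : ℕ) (v : Fin n), F.parStep^[m] (some v) = some x → F.level v = F.level x + m := by
  intro m
  induction m with
  | zero =>
    intro v h
    cases h
    rfl
  | succ m ih =>
    intro v h
    rw [Function.iterate_succ_apply] at h
    cases hpv : F.par v with
    | none =>
      rw [parStep_some, hpv, iterate_parStep_none] at h
      cases h
    | some u =>
      rw [parStep_some, hpv] at h
      rw [F.level_eq_of_par_eq_some hpv, ih u h]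
      omega

lemma level_le_height {v : Fin n} (hv : v ∈ F.verts) : F.level v ≤ F.height :=
  le_csSup (Set.toFinite _).bddAbove ⟨v, hv, rfl⟩

lemma DescOrSelf.eq_of_level_le {F : RootedForest n} {x v : Fin n} (h : F.DescOrSelf x v)
    (hl : F.level v ≤ F.level x) : v = x := by
  obtain ⟨m, hm⟩ := h
  have hm0 : m = 0 := by have := F.level_eq_of_iterate_parStep m v hm; omega
  subst hm0
  exact Option.some_injective _ hm

lemma level_eq_of_chain {t : ℕ} {p : ℕ → Fin n}
    (hedge : ∀ j, j + 1 < t → F.par (p (j + 1)) = some (p j)) :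
    ∀ j, j < t → F.level (p j) = F.level (p 0) + j := by
  intro j
  induction j with
  | zero => intro _; rfl
  | succ j ih =>
    intro hj
    rw [F.level_eq_of_par_eq_some (hedge j hj), ih (by omega)]
    rfl

lemma isPath_of_chain {t : ℕ} {p : ℕ → Fin n} (hmem : ∀ j, j < t → p j ∈ F.verts)
    (hedge : ∀ j, j + 1 < t → F.par (p (j + 1)) = some (p j)) : F.IsPath t p := by
  refine ⟨hmem, hedge, fun j k hj hk hjk => ?_⟩
  have hlj := F.level_eq_of_chain hedge j hj
  have hlk := F.level_eq_of_chain hedge k hk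
  rw [hjk] at hlj
  omega

section IsPath

variable {F} {t : ℕ} {p : ℕ → Fin n}

lemma IsPath.level (hp : F.IsPath t p) {j : ℕ} (hj : j < t) :
    F.level (p j) = F.level (p 0) + j :=
  F.level_eq_of_chain hp.2.1 j hj

lemma IsPath.descOrSelf (hp : F.IsPath t p) {j : ℕ} (hj : j < t) :
    F.DescOrSelf (p 0) (p j) := by
  refine ⟨j, ?_⟩
  induction j with
  | zero => rfl
  | succ j ih =>
    rw [Function.iterate_succ_apply, parStep_some, hp.2.1 j hj]
    exact ih (by omega)

lemma IsPath.cons (hp : F.IsPath t p) {x : Fin n} (hx : F.par (p 0) = some x) :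
    F.IsPath (t + 1) (seqCons x p) := by
  refine F.isPath_of_chain (fun j hj => ?_) (fun j hj => ?_)
  · cases j with
    | zero => exact F.mem_right _ _ hx
    | succ j => exact hp.1 j (by omega)
  · cases j with
    | zero => exact hx
    | succ j => exact hp.2.1 j (by omega)

lemma IsPath.head_eq_of_height_le {x : Fin n} (hp : F.IsPath (t + 1) p)
    (hx : F.DescOrSelf x (p 0)) (hh : F.height ≤ F.level x + t) : p 0 = x := by
  refine hx.eq_of_level_le (Nat.le_of_add_le_add_right (b := t) ?_)
  calc F.level (p 0) + t = F.level (p t) := (hp.level (by omega)).symm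
    _ ≤ F.height := F.level_le_height (hp.1 t (by omega))
    _ ≤ F.level x + t := hh

end IsPath

lemma par_delete_eq_some_iff {W : Set (Fin n)} {v u : Fin n} :
    (F.delete W).par v = some u ↔ F.par v = some u ∧ v ∉ W ∧ u ∉ W := by
  have := F.mem_left v u
  simp only [delete, Set.mem_sdiff]
  split_ifs
  · cases F.par v <;> grind
  · grind

lemma isPath_delete_iff {W : Set (Fin n)} {t : ℕ} {p : ℕ → Fin n} :
    (F.delete W).IsPath t p ↔ F.IsPath t p ∧ ∀ j, j < t → p j ∉ W := by
  constructor
  · rintro ⟨hmem, hedge, hinj⟩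
    exact ⟨⟨fun j hj => (hmem j hj).1, fun j hj => (F.par_delete_eq_some_iff.1 (hedge j hj)).1,
      hinj⟩, fun j hj => (hmem j hj).2⟩
  · rintro ⟨⟨hmem, hedge, hinj⟩, hW⟩
    exact ⟨fun j hj => ⟨hmem j hj, hW j hj⟩,
      fun j hj => F.par_delete_eq_some_iff.2 ⟨hedge j hj, hW (j + 1) hj, hW j (by omega)⟩,
      hinj⟩

def IsDisjointPathFamily (t : ℕ) {N : ℕ} (P : Fin N → ℕ → Fin n) : Prop :=
  (∀ i, F.IsPath (t + 1) (P i)) ∧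
    ∀ i i', i ≠ i' → ∀ j j', j < t + 1 → j' < t + 1 → P i j ≠ P i' j'

variable {F} {t : ℕ}

lemma IsDisjointPathFamily.card_le {N : ℕ} {P : Fin N → ℕ → Fin n}
    (hP : F.IsDisjointPathFamily t P) : N ≤ n := by
  have hinj : Function.Injective fun i => P i 0 := fun i i' h => by
    by_contra hne
    exact hP.2 i i' hne 0 0 t.succ_pos t.succ_pos h
  simpa using Fintype.card_le_of_injective _ hinj

lemma bddAbove_disjointPathFamily_card :
    BddAbove {N | ∃ P : Fin N → ℕ → Fin n, F.IsDisjointPathFamily t P} :=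
  ⟨n, fun _ ⟨_, hP⟩ => hP.card_le⟩

lemma le_pDisj {N : ℕ} {P : Fin N → ℕ → Fin n} (hP : F.IsDisjointPathFamily t P) :
    N ≤ F.pDisj t :=
  le_csSup bddAbove_disjointPathFamily_card ⟨P, hP⟩

variable (F t) in
lemma exists_isDisjointPathFamily_pDisj :
    ∃ P : Fin (F.pDisj t) → ℕ → Fin n, F.IsDisjointPathFamily t P :=
  have hempty : F.IsDisjointPathFamily t (finZeroElim : Fin 0 → ℕ → Fin n) :=
    ⟨finZeroElim, finZeroElim⟩
  Nat.sSup_mem (s := {N | ∃ P : Fin N → ℕ → Fin n, F.IsDisjointPathFamily t P})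
    ⟨0, _, hempty⟩ bddAbove_disjointPathFamily_card

lemma pDisj_eq_one {q : ℕ → Fin n} (hq : F.IsPath (t + 1) q) {x : Fin n}
    (hx : ∀ P, F.IsPath (t + 1) P → P 0 = x) : F.pDisj t = 1 := by
  have hq_family : F.IsDisjointPathFamily t fun _ : Fin 1 => q :=
    ⟨fun _ => hq, fun i i' h => absurd (Subsingleton.elim i i') h⟩
  refine le_antisymm ?_ (le_pDisj hq_family)
  obtain ⟨P, hPpath, hPdisj⟩ := F.exists_isDisjointPathFamily_pDisj t
  by_contra! h
  exact hPdisj ⟨0, by omega⟩ ⟨1, h⟩ (by simp [Fin.ext_iff]) 0 0 t.succ_pos t.succ_pos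
    ((hx _ (hPpath _)).trans (hx _ (hPpath _)).symm)

lemma pDisj_delete_add_one_le {W : Set (Fin n)} {q : ℕ → Fin n} (hq : F.IsPath (t + 1) q)
    (hqW : ∀ j, j < t + 1 → q j ∈ W) : (F.delete W).pDisj t + 1 ≤ F.pDisj t := by
  obtain ⟨P, hPpath, hPdisj⟩ := (F.delete W).exists_isDisjointPathFamily_pDisj t
  have hP : ∀ i, F.IsPath (t + 1) (P i) ∧ ∀ j, j < t + 1 → P i j ∉ W :=
    fun i => F.isPath_delete_iff.1 (hPpath i)
  refine le_pDisj (P := Fin.cons q P) ⟨Fin.cases hq fun i => (hP i).1, ?_⟩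
  intro i i' hii' j j' hj hj'
  induction i using Fin.cases with
  | zero =>
    induction i' using Fin.cases with
    | zero => exact absurd rfl hii'
    | succ i' =>
      intro h
      simp only [Fin.cons_zero, Fin.cons_succ] at h
      exact (hP i').2 j' hj' (h ▸ hqW j hj)
  | succ i =>
    induction i' using Fin.cases with
    | zero =>
      intro h
      simp only [Fin.cons_zero, Fin.cons_succ] at h
      exact (hP i).2 j hj (h ▸ hqW j' hj')
    | succ i' => exact hPdisj i i' (fun h => hii' (h ▸ rfl)) j j' hj hj'

end RootedForest

open RootedForest in
theorem pDisj_gamma0_general {n t : ℕ} (ht : 2 ≤ t)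
    (Γ : RootedTreeOn n) (p : ℕ → Fin n) (x0 : Fin n)
    (hp : Γ.toRootedForest.IsPath t p)
    (hlev : Γ.toRootedForest.level (p (t - 1)) = Γ.toRootedForest.height)
    (hx0 : Γ.par (p 0) = some x0) :
    (Γ.toRootedForest.delete {v | ¬ Γ.toRootedForest.DescOrSelf x0 v}).pDisj t = 1 ∧
    (Γ.toRootedForest.delete {v | Γ.toRootedForest.DescOrSelf x0 v}).pDisj t + 1 ≤
      Γ.toRootedForest.pDisj t := by
  set F := Γ.toRootedForest
  have hq : F.IsPath (t + 1) (seqCons x0 p) := hp.cons hx0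
  have hq_desc : ∀ j, j < t + 1 → F.DescOrSelf x0 (seqCons x0 p j) := fun _ hj =>
    hq.descOrSelf hj
  have hheight : F.height ≤ F.level x0 + t := by
    calc F.height = F.level (seqCons x0 p t) := by rw [seqCons_of_pos x0 p (by omega), hlev]
      _ ≤ F.level x0 + t := (hq.level (by omega)).le
  constructor
  · have hq₀ : (F.delete {v | ¬ F.DescOrSelf x0 v}).IsPath (t + 1) (seqCons x0 p) :=
      F.isPath_delete_iff.2 ⟨hq, fun j hj => not_not.2 (hq_desc j hj)⟩
    refine pDisj_eq_one (x := x0) hq₀ fun P hP => ?_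
    obtain ⟨hPF, hP_desc⟩ := F.isPath_delete_iff.1 hP
    exact hPF.head_eq_of_height_le (not_not.1 (hP_desc 0 t.succ_pos)) hheight
  · exact pDisj_delete_add_one_le hq hq_desc

open RootedForest in
/-- With `x_{i_t} = p (t-1)` a leaf at the highest level `h ≥ t` of `Γ`
(so that the parent `x0` of `x_{i_1} = p 0` exists), one has `p_t(Γ_0) = 1` and
`p_t(Γ∖Γ_0) ≤ p_t(Γ) − 1` (the latter stated as `p_t(Γ∖Γ_0) + 1 ≤ p_t(Γ)`), where `Γ_0`
is the induced subtree of `Γ` rooted at `x0`. -/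
theorem pDisj_gamma0 {n t : ℕ} (ht : 2 ≤ t)
    (Γ : RootedTreeOn n) (p : ℕ → Fin n) (x0 : Fin n)
    (hht : t ≤ Γ.toRootedForest.height)
    (hp : Γ.toRootedForest.IsPath t p)
    (hleaf : Γ.toRootedForest.IsLeaf (p (t - 1)))
    (hlev : Γ.toRootedForest.level (p (t - 1)) = Γ.toRootedForest.height)
    (hx0 : Γ.par (p 0) = some x0) :
    (Γ.toRootedForest.delete {v | ¬ Γ.toRootedForest.DescOrSelf x0 v}).pDisj t = 1 ∧
    (Γ.toRootedForest.delete {v | Γ.toRootedForest.DescOrSelf x0 v}).pDisj t + 1 ≤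
      Γ.toRootedForest.pDisj t :=
  pDisj_gamma0_general ht Γ p x0 hp hlev hx0
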